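/- Let T be a radially symmetric proper infinite rooted tree with radially symmetric weight σ. Then Mod_{1,σ}(Γ_∞) = inf{ Σ_{e∈C} σ(e) : C is a cut for Γ_∞ }, where a cut for Γ_∞ is a set C of edges such that every infinite descending path γ ∈ Γ_∞ contains at least one edge of C, and Σ_{e∈C} σ(e) is taken in [0,∞]. -/

import Mathlib

open scoped ENNReal NNReal

/-- A proper infinite rooted tree, modeled as a prefix-closed set of finite lists of
naturals in which every node has at least one and finitely many children. -/
structure PTree where
  mem : List ℕ → Prop
  root_mem : mem []
  prefix_closed : ∀ ⦃l₁ l₂ : List ℕ⦄, l₁ <+: l₂ → mem l₂ → mem l₁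
  child_exists : ∀ ⦃l⦄, mem l → ∃ a, mem (l ++ [a])
  finite_children : ∀ ⦃l⦄, mem l → {a : ℕ | mem (l ++ [a])}.Finite

/-- The initial segment of length `n` of `f : ℕ → ℕ`, as a list. -/
def seg (f : ℕ → ℕ) (n : ℕ) : List ℕ := (List.range n).map f

namespace PTree

variable (T : PTree)

/-- The edges of the tree: the nonempty lists in `T`. -/
def Edge : Type := {e : List ℕ // T.mem e ∧ e ≠ []}

/-- The family `Γ_∞` of infinite descending paths: functions all of whose
finite initial segments lie in `T`. -/
def GammaInf : Set (ℕ → ℕ) := {f | ∀ n, T.mem (seg f n)}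

/-- `ρ`-length of the infinite descending path determined by `f`: the sum of `ρ`
over the nonempty initial segments of `f`. -/
noncomputable def lenInf (ρ : List ℕ → ℝ≥0) (f : ℕ → ℕ) : ℝ≥0∞ :=
  ∑' n : ℕ, (ρ (seg f (n + 1)) : ℝ≥0∞)

/-- `ρ`-length of the finite descending path `γ_e` consisting of the nonempty
prefixes of the edge `e`. -/
noncomputable def lenFin (ρ : List ℕ → ℝ≥0) (e : List ℕ) : ℝ≥0∞ :=
  ∑ k ∈ Finset.range e.length, (ρ (e.take (k + 1)) : ℝ≥0∞)

/-- Admissible densities for the family `Γ_n` (identified with the shell `S_n`). -/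
def AdmFin (n : ℕ) : Set (List ℕ → ℝ≥0) :=
  {ρ | ∀ e : List ℕ, T.mem e → e.length = n → 1 ≤ lenFin ρ e}

/-- Admissible densities for the family `Γ_∞`. -/
def AdmInf : Set (List ℕ → ℝ≥0) :=
  {ρ | ∀ f ∈ T.GammaInf, 1 ≤ lenInf ρ f}

/-- The `p`-energy of a density `ρ` with respect to the weight `σ`. -/
noncomputable def energy (p : ℝ) (σ ρ : List ℕ → ℝ≥0) : ℝ≥0∞ :=
  ∑' e : T.Edge, (σ e.1 : ℝ≥0∞) * (ρ e.1 : ℝ≥0∞) ^ p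

/-- The `∞`-energy of a density `ρ` with respect to the weight `σ`. -/
noncomputable def energyTop (σ ρ : List ℕ → ℝ≥0) : ℝ≥0∞ :=
  ⨆ e : T.Edge, (σ e.1 : ℝ≥0∞) * (ρ e.1 : ℝ≥0∞)

/-- The `p`-modulus of the family `Γ_n`. -/
noncomputable def ModFin (p : ℝ) (σ : List ℕ → ℝ≥0) (n : ℕ) : ℝ≥0∞ :=
  ⨅ ρ ∈ T.AdmFin n, T.energy p σ ρ

/-- The `p`-modulus of the family `Γ_∞`. -/
noncomputable def ModInf (p : ℝ) (σ : List ℕ → ℝ≥0) : ℝ≥0∞ :=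
  ⨅ ρ ∈ T.AdmInf, T.energy p σ ρ

/-- The `∞`-modulus of the family `Γ_∞`. -/
noncomputable def ModTop (σ : List ℕ → ℝ≥0) : ℝ≥0∞ :=
  ⨅ ρ ∈ T.AdmInf, T.energyTop σ ρ

end PTree

namespace PTree

/-- A tree is radially symmetric if the number of children of an edge depends
only on its generation. -/
def RadiallySymmetric (T : PTree) : Prop :=
  ∀ ⦃e e' : List ℕ⦄, T.mem e → T.mem e' → e.length = e'.length →
    Nat.card {a : ℕ // T.mem (e ++ [a])} = Nat.card {a : ℕ // T.mem (e' ++ [a])}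

end PTree

/-!
The indicator of a cut `C` is admissible with energy `σ(C)`, which gives `≤`. Conversely every
shell `S_{k+1}` is a cut, of weight `σ_{k+1} |S_{k+1}|`, so it suffices to bound the energy of an
admissible `ρ` from below by `M = inf_k σ_{k+1} |S_{k+1}|`. Radial symmetry makes the mean
`ρ`-length of the paths from the root to generation `n` equal to
`B_n = ∑_{k<n} ρ(S_{k+1}) / |S_{k+1}|`, so every generation has a node at `ρ`-distance at most
`sup_n B_n` from the root; by Kőnig's lemma these nodes can be taken along one infinite path,
and admissibility gives `1 ≤ sup_n B_n`. Finally the energy is at least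
`∑_{k<n} σ_{k+1} ρ(S_{k+1}) ≥ M B_n` for every `n`.
-/

@[simp]
theorem length_seg (f : ℕ → ℕ) (n : ℕ) : (seg f n).length = n := by
  simp [seg]

@[simp]
theorem getElem_seg (f : ℕ → ℕ) {n k : ℕ} (hk : k < (seg f n).length) : (seg f n)[k] = f k := by
  simp [seg]

theorem take_seg (f : ℕ → ℕ) (m n : ℕ) : (seg f n).take m = seg f (min m n) := by
  simp [seg, ← List.map_take, List.take_range]

namespace PTree

open Finset

variable {T : PTree}

theorem mem_of_mem_append {l l' : List ℕ} (h : T.mem (l ++ l')) : T.mem l :=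
  T.prefix_closed (List.prefix_append l l') h

theorem setOf_mem_append_singleton_finite (T : PTree) (v : List ℕ) :
    {a : ℕ | T.mem (v ++ [a])}.Finite := by
  by_cases hv : T.mem v
  · exact T.finite_children hv
  · convert Set.finite_empty
    exact Set.eq_empty_of_forall_notMem fun a ha => hv (mem_of_mem_append ha)

/-- The labels `a` of the children `v ++ [a]` of `v`. -/
noncomputable def children (T : PTree) (v : List ℕ) : Finset ℕ :=
  (T.setOf_mem_append_singleton_finite v).toFinset

@[simp]
theorem mem_children {v : List ℕ} {a : ℕ} : a ∈ T.children v ↔ T.mem (v ++ [a]) := by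
  simp [children]

/-- The nodes of generation `n`; `T.level (k + 1)` is the shell `S_{k+1}`. -/
noncomputable def level (T : PTree) : ℕ → Finset (List ℕ)
  | 0 => {[]}
  | n + 1 => (T.level n).biUnion fun v => (T.children v).image (v ++ [·])

theorem mem_level {n : ℕ} {l : List ℕ} : l ∈ T.level n ↔ T.mem l ∧ l.length = n := by
  induction n generalizing l with
  | zero =>
    simp only [level, mem_singleton, List.length_eq_zero_iff, iff_and_self]
    rintro rfl
    exact T.root_mem
  | succ n ih =>
    simp only [level, mem_biUnion, mem_image, mem_children, ih]
    constructor
    · rintro ⟨v, ⟨-, rfl⟩, a, ha, rfl⟩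
      exact ⟨ha, by simp⟩
    · rintro ⟨hl, hlen⟩
      have hne : l ≠ [] := by rintro rfl; simp at hlen
      refine ⟨l.dropLast, ⟨mem_of_mem_append (l' := [l.getLast hne]) ?_, by simp [hlen]⟩,
        l.getLast hne, ?_, List.dropLast_append_getLast hne⟩ <;>
      rwa [List.dropLast_append_getLast hne]

theorem level_nonempty (T : PTree) (n : ℕ) : (T.level n).Nonempty := by
  induction n with
  | zero => simp [level]
  | succ n ih =>
    obtain ⟨v, hv⟩ := ih
    obtain ⟨a, ha⟩ := T.child_exists (mem_level.1 hv).1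
    exact ⟨v ++ [a], mem_level.2 ⟨ha, by simp [(mem_level.1 hv).2]⟩⟩

theorem sum_level_succ {M : Type*} [AddCommMonoid M] (g : List ℕ → M) (n : ℕ) :
    ∑ l ∈ T.level (n + 1), g l = ∑ v ∈ T.level n, ∑ a ∈ T.children v, g (v ++ [a]) := by
  rw [level, sum_biUnion]
  · exact sum_congr rfl fun v _ => sum_image fun a _ b _ h => by simpa using h
  · intro v _ w _ hvw
    simp only [Function.onFun, disjoint_left, mem_image]
    rintro _ ⟨a, -, rfl⟩ ⟨b, -, h⟩
    exact hvw (List.append_inj_left' h rfl).symm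

theorem seg_mem_level {f : ℕ → ℕ} (hf : f ∈ T.GammaInf) (n : ℕ) : seg f n ∈ T.level n :=
  mem_level.2 ⟨hf n, length_seg f n⟩

/-- Kőnig's lemma. -/
theorem exists_mem_gammaInf_forall_seg {P : List ℕ → Prop}
    (hP : ∀ ⦃l₁ l₂⦄, l₁ <+: l₂ → P l₂ → P l₁) (h : ∀ n, ∃ l ∈ T.level n, P l) :
    ∃ f ∈ T.GammaInf, ∀ n, P (seg f n) := by
  let α (n : ℕ) := {l // l ∈ T.level n ∧ P l}
  have (n : ℕ) : Finite (α n) :=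
    Finite.of_injective (fun l : α n => (⟨l.1, l.2.1⟩ : T.level n))
      fun l l' h => Subtype.ext (congrArg (fun x : T.level n => x.1) h)
  have : ∀ n, Nonempty (α n) := fun n =>
    let ⟨l, hl, hPl⟩ := h n
    ⟨⟨l, hl, hPl⟩⟩
  let π {i j : ℕ} (hij : i ≤ j) (l : α j) : α i :=
    ⟨l.1.take i, mem_level.2 ⟨T.prefix_closed (List.take_prefix _ _) (mem_level.1 l.2.1).1,
      by simp [(mem_level.1 l.2.1).2, hij]⟩, hP (List.take_prefix _ _) l.2.2⟩
  obtain ⟨g, hg⟩ := exists_seq_forall_proj_of_forall_finite π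
    (fun i l => Subtype.ext (List.take_of_length_le (mem_level.1 l.2.1).2.le))
    (fun i j k hij hjk l => Subtype.ext (by simp [π, List.take_take, hij]))
    (fun i l => Set.toFinite _)
  have hseg (n : ℕ) : seg (fun k => (g (k + 1)).1.getD k 0) n = (g n).1 := by
    have hlen (n : ℕ) : (g n).1.length = n := (mem_level.1 (g n).2.1).2
    refine List.ext_getElem (by simp [hlen]) fun k hk hk' => ?_
    have hk'' : k + 1 ≤ n := by simp only [length_seg] at hk; omega
    have := congrArg Subtype.val (hg hk'')
    simp only [π] at this
    rw [getElem_seg, ← this]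
    simp [List.getElem?_eq_getElem hk']
  exact ⟨_, fun n => hseg n ▸ (mem_level.1 (g n).2.1).1, fun n => hseg n ▸ (g n).2.2⟩

@[simp]
theorem lenFin_nil (ρ : List ℕ → ℝ≥0) : lenFin ρ [] = 0 := by
  simp [lenFin]

theorem lenFin_append_singleton (ρ : List ℕ → ℝ≥0) (v : List ℕ) (a : ℕ) :
    lenFin ρ (v ++ [a]) = lenFin ρ v + ρ (v ++ [a]) := by
  have hlen : (v ++ [a]).length = v.length + 1 := List.length_append
  rw [lenFin, hlen, sum_range_succ, ← hlen, List.take_length]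
  congr 1
  exact sum_congr rfl fun k hk =>
    by rw [List.take_append_of_le_length (by simp at hk; omega)]

theorem lenFin_mono (ρ : List ℕ → ℝ≥0) {l₁ l₂ : List ℕ} (h : l₁ <+: l₂) :
    lenFin ρ l₁ ≤ lenFin ρ l₂ := by
  obtain ⟨t, rfl⟩ := h
  induction t using List.reverseRecOn with
  | nil => simp
  | append_singleton t a ih =>
    rw [← List.append_assoc, lenFin_append_singleton]
    exact ih.trans le_self_add

theorem lenFin_seg (ρ : List ℕ → ℝ≥0) (f : ℕ → ℕ) (n : ℕ) :
    lenFin ρ (seg f n) = ∑ k ∈ range n, (ρ (seg f (k + 1)) : ℝ≥0∞) := by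
  rw [lenFin, length_seg]
  exact sum_congr rfl fun k hk => by rw [take_seg, min_eq_left (by simpa using hk)]

theorem lenInf_eq_iSup_lenFin_seg (ρ : List ℕ → ℝ≥0) (f : ℕ → ℕ) :
    lenInf ρ f = ⨆ n, lenFin ρ (seg f n) := by
  simp only [lenInf, ENNReal.tsum_eq_iSup_nat, lenFin_seg]

theorem exists_mem_gammaInf_lenInf_le {ρ : List ℕ → ℝ≥0} {S : ℝ≥0∞}
    (h : ∀ n, ∃ l ∈ T.level n, lenFin ρ l ≤ S) : ∃ f ∈ T.GammaInf, lenInf ρ f ≤ S := by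
  obtain ⟨f, hf, hfS⟩ := exists_mem_gammaInf_forall_seg
    (fun _ _ h hS => (lenFin_mono ρ h).trans hS) h
  exact ⟨f, hf, (lenInf_eq_iSup_lenFin_seg ρ f).trans_le (iSup_le hfS)⟩

theorem natCard_eq_card_children (v : List ℕ) :
    Nat.card {a : ℕ // T.mem (v ++ [a])} = (T.children v).card :=
  Nat.card_eq_card_finite_toFinset (T.setOf_mem_append_singleton_finite v)

/-- The common number of children of the nodes of generation `n` when `T` is radially
symmetric. -/
noncomputable def branching (T : PTree) (n : ℕ) : ℕ :=
  (T.level n).sup fun v => (T.children v).card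

theorem card_children_eq_branching (hT : T.RadiallySymmetric) {n : ℕ} {v : List ℕ}
    (hv : v ∈ T.level n) : (T.children v).card = T.branching n := by
  refine le_antisymm (le_sup (f := fun v => (T.children v).card) hv) (Finset.sup_le fun w hw => ?_)
  obtain ⟨hv', rfl⟩ := mem_level.1 hv
  obtain ⟨hw', hwv⟩ := mem_level.1 hw
  rw [← natCard_eq_card_children, ← natCard_eq_card_children, hT hw' hv' hwv]

theorem card_level_succ (hT : T.RadiallySymmetric) (n : ℕ) :
    (T.level (n + 1)).card = T.branching n * (T.level n).card := by
  rw [card_eq_sum_ones, sum_level_succ, mul_comm, ← smul_eq_mul, ← sum_const]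
  exact sum_congr rfl fun v hv => by rw [← card_eq_sum_ones, card_children_eq_branching hT hv]

theorem natCast_card_level_ne_zero (T : PTree) (n : ℕ) : ((T.level n).card : ℝ≥0∞) ≠ 0 := by
  simpa using (T.level_nonempty n).ne_empty

noncomputable def shellMean (T : PTree) (ρ : List ℕ → ℝ≥0) (n : ℕ) : ℝ≥0∞ :=
  (∑ e ∈ T.level n, (ρ e : ℝ≥0∞)) / (T.level n).card

theorem sum_lenFin_level (hT : T.RadiallySymmetric) (ρ : List ℕ → ℝ≥0) (n : ℕ) :
    ∑ l ∈ T.level n, lenFin ρ l = (T.level n).card * ∑ k ∈ range n, T.shellMean ρ (k + 1) := by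
  induction n with
  | zero => simp [level]
  | succ n ih =>
    have hstep : ∑ l ∈ T.level (n + 1), lenFin ρ l =
        T.branching n * ∑ v ∈ T.level n, lenFin ρ v + ∑ e ∈ T.level (n + 1), (ρ e : ℝ≥0∞) := by
      simp only [sum_level_succ, lenFin_append_singleton, sum_add_distrib, sum_const, mul_sum]
      refine congrArg (· + _) (sum_congr rfl fun v hv => ?_)
      rw [card_children_eq_branching hT hv, nsmul_eq_mul]
    rw [hstep, ih, sum_range_succ, mul_add, shellMean,
      ENNReal.mul_div_cancel (T.natCast_card_level_ne_zero _) (ENNReal.natCast_ne_top _),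
      card_level_succ hT, Nat.cast_mul, mul_assoc]

theorem exists_lenFin_le_sum_shellMean (hT : T.RadiallySymmetric) (ρ : List ℕ → ℝ≥0) (n : ℕ) :
    ∃ l ∈ T.level n, lenFin ρ l ≤ ∑ k ∈ range n, T.shellMean ρ (k + 1) :=
  ENNReal.exists_le_of_sum_le (T.level_nonempty n)
    (by rw [sum_lenFin_level hT, sum_const, nsmul_eq_mul])

theorem one_le_iSup_sum_shellMean (hT : T.RadiallySymmetric) {ρ : List ℕ → ℝ≥0}
    (hρ : ρ ∈ T.AdmInf) : 1 ≤ ⨆ n, ∑ k ∈ range n, T.shellMean ρ (k + 1) := by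
  obtain ⟨f, hf, hfS⟩ := exists_mem_gammaInf_lenInf_le fun n =>
    (exists_lenFin_le_sum_shellMean hT ρ n).imp fun _ hl =>
      ⟨hl.1, hl.2.trans (le_iSup (fun n => ∑ k ∈ range n, T.shellMean ρ (k + 1)) n)⟩
  exact (hρ f hf).trans hfS

theorem energy_one_eq_tsum_indicator (σ ρ : List ℕ → ℝ≥0) :
    T.energy 1 σ ρ =
      ∑' l, {l | T.mem l ∧ l ≠ []}.indicator (fun l => (σ l : ℝ≥0∞) * ρ l) l := by
  simp only [energy, ENNReal.rpow_one]
  exact tsum_subtype {l | T.mem l ∧ l ≠ []} fun l => (σ l : ℝ≥0∞) * ρ l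

theorem sum_le_energy_one (σ ρ : List ℕ → ℝ≥0) {s : Finset (List ℕ)}
    (hs : ∀ l ∈ s, T.mem l ∧ l ≠ []) : ∑ l ∈ s, (σ l : ℝ≥0∞) * ρ l ≤ T.energy 1 σ ρ := by
  rw [energy_one_eq_tsum_indicator]
  refine le_of_eq_of_le (sum_congr rfl fun l hl => ?_) (ENNReal.sum_le_tsum s)
  simp [hs l hl]

theorem disjoint_level {m n : ℕ} (h : m ≠ n) : Disjoint (T.level m) (T.level n) :=
  disjoint_left.2 fun _ hm hn => h ((mem_level.1 hm).2.symm.trans (mem_level.1 hn).2)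

theorem mem_level_succ_ne_nil {n : ℕ} {l : List ℕ} (hl : l ∈ T.level (n + 1)) : l ≠ [] := by
  rintro rfl
  simp [mem_level] at hl

theorem iInf_mul_card_level_le_energy (hT : T.RadiallySymmetric) (σs : ℕ → ℝ≥0)
    {ρ : List ℕ → ℝ≥0} (hρ : ρ ∈ T.AdmInf) :
    ⨅ k : ℕ, (σs (k + 1) : ℝ≥0∞) * (T.level (k + 1)).card ≤
      T.energy 1 (fun l => σs l.length) ρ := by
  set M := ⨅ k : ℕ, (σs (k + 1) : ℝ≥0∞) * (T.level (k + 1)).card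
  have hshell (k : ℕ) : M * T.shellMean ρ (k + 1) ≤
      ∑ e ∈ T.level (k + 1), (σs e.length : ℝ≥0∞) * ρ e := by
    calc M * T.shellMean ρ (k + 1)
        ≤ σs (k + 1) * (T.level (k + 1)).card * T.shellMean ρ (k + 1) :=
          mul_le_mul_left (iInf_le _ k) _
      _ = ∑ e ∈ T.level (k + 1), (σs e.length : ℝ≥0∞) * ρ e := by
          rw [shellMean, mul_assoc, ENNReal.mul_div_cancel (T.natCast_card_level_ne_zero _)
            (ENNReal.natCast_ne_top _), mul_sum]
          exact sum_congr rfl fun e he => by rw [(mem_level.1 he).2]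
  calc M = M * 1 := (mul_one M).symm
    _ ≤ M * ⨆ n, ∑ k ∈ range n, T.shellMean ρ (k + 1) :=
        mul_le_mul_right (one_le_iSup_sum_shellMean hT hρ) M
    _ = ⨆ n, ∑ k ∈ range n, M * T.shellMean ρ (k + 1) := by
        simp only [ENNReal.mul_iSup, mul_sum]
    _ ≤ T.energy 1 (fun l => σs l.length) ρ := iSup_le fun n => by
        refine (sum_le_sum fun k _ => hshell k).trans ?_
        rw [← sum_biUnion]
        · exact sum_le_energy_one _ _ fun l hl => by
            obtain ⟨k, -, hk⟩ := mem_biUnion.1 hl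
            exact ⟨(mem_level.1 hk).1, mem_level_succ_ne_nil hk⟩
        · exact fun i _ j _ hij => disjoint_level (by omega)

def IsCut (T : PTree) (C : Set (List ℕ)) : Prop :=
  (∀ l ∈ C, T.mem l ∧ l ≠ []) ∧ ∀ f ∈ T.GammaInf, ∃ n : ℕ, 1 ≤ n ∧ seg f n ∈ C

theorem isCut_level (T : PTree) (k : ℕ) : T.IsCut (T.level (k + 1)) :=
  ⟨fun _ hl => ⟨(mem_level.1 hl).1, mem_level_succ_ne_nil hl⟩,
    fun _ hf => ⟨k + 1, k.succ_pos, seg_mem_level hf (k + 1)⟩⟩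

theorem tsum_level (T : PTree) (σs : ℕ → ℝ≥0) (n : ℕ) :
    ∑' e : (T.level n : Set (List ℕ)), (σs e.1.length : ℝ≥0∞) = σs n * (T.level n).card := by
  refine (Finset.tsum_subtype (T.level n) fun l => (σs l.length : ℝ≥0∞)).trans ?_
  rw [mul_comm, ← nsmul_eq_mul, ← sum_const]
  exact sum_congr rfl fun e he => by rw [(mem_level.1 he).2]

theorem indicator_one_mem_admInf {C : Set (List ℕ)} (hC : T.IsCut C) :
    C.indicator 1 ∈ T.AdmInf := fun f hf => by
  obtain ⟨n, hn, hfn⟩ := hC.2 f hf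
  obtain ⟨k, rfl⟩ := Nat.exists_eq_add_of_le' hn
  calc (1 : ℝ≥0∞) = (C.indicator 1 (seg f (k + 1)) : ℝ≥0) := by simp [hfn]
    _ ≤ lenInf (C.indicator 1) f :=
        ENNReal.le_tsum (f := fun n => (C.indicator 1 (seg f (n + 1)) : ℝ≥0)) k

theorem modInf_one_le_tsum_of_isCut (σ : List ℕ → ℝ≥0) {C : Set (List ℕ)} (hC : T.IsCut C) :
    T.ModInf 1 σ ≤ ∑' e : C, (σ e : ℝ≥0∞) := by
  refine (iInf₂_le _ (indicator_one_mem_admInf hC)).trans_eq ?_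
  rw [energy_one_eq_tsum_indicator, _root_.tsum_subtype C fun l => (σ l : ℝ≥0∞)]
  refine tsum_congr fun l => ?_
  by_cases hl : l ∈ C
  · simp [hl, hC.1 l hl]
  · simp [hl]

end PTree

theorem stmt9_general (T : PTree) (hT : T.RadiallySymmetric)
    (σs : ℕ → ℝ≥0) :
    T.ModInf 1 (fun l => σs l.length) =
      ⨅ C ∈ {C : Set (List ℕ) |
          (∀ l ∈ C, T.mem l ∧ l ≠ []) ∧
          ∀ f ∈ T.GammaInf, ∃ n : ℕ, 1 ≤ n ∧ seg f n ∈ C},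
        ∑' e : C, (σs e.1.length : ℝ≥0∞) := by
  refine le_antisymm (le_iInf₂ fun C hC => T.modInf_one_le_tsum_of_isCut _ hC) ?_
  refine le_iInf₂ fun ρ hρ => le_trans ?_ (T.iInf_mul_card_level_le_energy hT σs hρ)
  exact le_iInf fun k => (iInf₂_le _ (T.isCut_level k)).trans_eq (T.tsum_level σs (k + 1))

/-- for a radially symmetric tree with radially symmetric weight,
the `1`-modulus of `Γ_∞` equals the infimum of `σ(C)` over all cuts `C` for `Γ_∞`. -/
theorem stmt9 (T : PTree) (hT : T.RadiallySymmetric)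
    (σs : ℕ → ℝ≥0) (hσ : ∀ n, 0 < σs n) :
    T.ModInf 1 (fun l => σs l.length) =
      ⨅ C ∈ {C : Set (List ℕ) |
          (∀ l ∈ C, T.mem l ∧ l ≠ []) ∧
          ∀ f ∈ T.GammaInf, ∃ n : ℕ, 1 ≤ n ∧ seg f n ∈ C},
        ∑' e : C, (σs e.1.length : ℝ≥0∞) :=
  stmt9_general T hT σs
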